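/- arXiv:1502.06245 — 2 statements merged into one kernel-verified Lean document; each statement's English description precedes it below -/
import Mathlib

section
/- Let H be an induced-hereditary graph property closed under union with K₁, G a graph, and e = xy an edge with γ_H(G − e) < γ_H(G). Then every minimum dominating H-set M of G − e contains both x and y, and γ_H(G_e) ≤ γ_H(G − e) < γ_H(G). -/
open SimpleGraph

/-- A graph property: a class of finite simple graphs on arbitrary vertex types. -/
abbrev GraphProp := ∀ (V : Type), SimpleGraph V → Prop

/-- Closure under graph isomorphism. -/
def IsoClosed (P : GraphProp) : Prop :=
  ∀ (V W : Type) (G : SimpleGraph V) (H : SimpleGraph W), Nonempty (G ≃g H) → P V G → P W H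

/-- A property is nondegenerate if it contains all edgeless graphs. -/
def Nondegenerate (P : GraphProp) : Prop :=
  IsoClosed P ∧ ∀ (V : Type), P V ⊥

/-- Closed under induced subgraphs. -/
def InducedHereditary (P : GraphProp) : Prop :=
  IsoClosed P ∧ ∀ (V : Type) (G : SimpleGraph V) (s : Set V), P V G → P s (G.induce s)

/-- Closed under all subgraphs. -/
def Hereditary (P : GraphProp) : Prop :=
  InducedHereditary P ∧ ∀ (V : Type) (G G' : SimpleGraph V), G' ≤ G → P V G → P V G'

/-- The graph `G` together with one new isolated vertex. -/
def addK1 {V : Type} (G : SimpleGraph V) : SimpleGraph (V ⊕ Unit) where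
  Adj a b := ∃ x y, a = Sum.inl x ∧ b = Sum.inl y ∧ G.Adj x y
  symm := by constructor; rintro a b ⟨x, y, rfl, rfl, h⟩; exact ⟨y, x, rfl, rfl, h.symm⟩
  loopless := by constructor; rintro a ⟨x, y, rfl, hy, h⟩; simp only [Sum.inl.injEq] at hy; subst hy; exact G.loopless.irrefl _ h

/-- Closure under disjoint union with `K₁`. -/
def ClosedUnderK1 (P : GraphProp) : Prop :=
  ∀ (V : Type) (G : SimpleGraph V), P V G → P (V ⊕ Unit) (addK1 G)

/-- `S` is a dominating set of `G`. -/
def IsDominating {V : Type} (G : SimpleGraph V) (S : Set V) : Prop :=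
  ∀ v ∉ S, ∃ u ∈ S, G.Adj u v

/-- `S` is a dominating set inducing a subgraph with property `P`. -/
def IsDomPSet (P : GraphProp) {V : Type} (G : SimpleGraph V) (S : Set V) : Prop :=
  IsDominating G S ∧ P S (G.induce S)

/-- The domination number with respect to the property `P`. -/
noncomputable def gammaP (P : GraphProp) {V : Type} [Fintype V] (G : SimpleGraph V) : ℕ :=
  sInf (Set.ncard '' {S : Set V | IsDomPSet P G S})

/-- A minimum dominating `P`-set. -/
def IsGammaSet (P : GraphProp) {V : Type} [Fintype V] (G : SimpleGraph V) (S : Set V) : Prop :=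
  IsDomPSet P G S ∧ S.ncard = gammaP P G

/-- The ordinary domination number. -/
noncomputable def gamma {V : Type} [Fintype V] (G : SimpleGraph V) : ℕ :=
  sInf (Set.ncard '' {S : Set V | IsDominating G S})

/-- The graph obtained from `G` by deleting the edge `uv` and replacing it by the
path `u - x₀ - x₁ - ⋯ - x_{t-1} - v` through `t` new vertices. -/
def subdiv {V : Type} (G : SimpleGraph V) (u v : V) (t : ℕ) : SimpleGraph (V ⊕ Fin t) where
  Adj a b := match a, b with
    | Sum.inl a, Sum.inl b => G.Adj a b ∧ ¬((a = u ∧ b = v) ∨ (a = v ∧ b = u))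
    | Sum.inl a, Sum.inr i => (a = u ∧ (i : ℕ) = 0) ∨ (a = v ∧ (i : ℕ) + 1 = t)
    | Sum.inr i, Sum.inl a => (a = u ∧ (i : ℕ) = 0) ∨ (a = v ∧ (i : ℕ) + 1 = t)
    | Sum.inr i, Sum.inr j => (i : ℕ) + 1 = (j : ℕ) ∨ (j : ℕ) + 1 = (i : ℕ)
  symm := by
    constructor
    rintro (a | i) (b | j) h
    · exact ⟨h.1.symm, fun hc => h.2 (by tauto)⟩
    · exact h
    · exact h
    · tauto
  loopless := by
    constructor
    rintro (a | i) h
    · exact G.loopless.irrefl a h.1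
    · omega

/-- The private neighbour set `pn_G[x, X] = {y : N[y,G] ∩ X = {x}}`. -/
def pn {V : Type} (G : SimpleGraph V) (X : Set V) (x : V) : Set V :=
  {y | insert y (G.neighborSet y) ∩ X = {x}}

/-- The graph `G` with the vertex `v` deleted. -/
abbrev delVert {V : Type} (G : SimpleGraph V) (v : V) : SimpleGraph {w : V // w ≠ v} :=
  G.induce {w : V | w ≠ v}

/-- An independent set. -/
def IsIndep {V : Type} (G : SimpleGraph V) (S : Set V) : Prop :=
  S.Pairwise fun a b => ¬ G.Adj a b

/-! If `M` is a dominating `P`-set of `G − xy` missing an endpoint of `xy`, then `M` is also a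
dominating `P`-set of `G`, since `G` and `G − xy` induce the same graph on `M`; so a set smaller
than `γ_P(G)` must contain both endpoints. Such a set, with `x ∈ M`, also dominates the
subdivision `G_e`: the new vertex is adjacent to `x`, and on old vertices `G_e` is `G − xy`.
A minimum dominating `P`-set of `G − xy` exists: `γ_P(G) > 0` means `G` has a dominating `P`-set
(`sInf ∅ = 0`), so `P` is nonempty and hence contains every finite edgeless graph (grow `∅` one
`K₁` at a time), and a maximal independent set is dominating. -/

section Edgeless

variable {P : GraphProp}

lemma IsoClosed.of_equiv_bot (hP : IsoClosed P) {V W : Type} (e : V ≃ W)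
    (hV : P V ⊥) : P W ⊥ :=
  hP V W ⊥ ⊥ ⟨{ toEquiv := e, map_rel_iff' := by simp }⟩ hV

lemma addK1_bot (V : Type) : addK1 (⊥ : SimpleGraph V) = ⊥ := by
  ext a b
  simp [addK1]

lemma InducedHereditary.bot_of_closedUnderK1 (h1 : InducedHereditary P) (h2 : ClosedUnderK1 P)
    {W : Type} {Gw : SimpleGraph W} (hw : P W Gw) (V : Type) [Finite V] : P V ⊥ := by
  refine Finite.induction_empty_option (P := fun V => P V ⊥)
    (fun e hα => IsoClosed.of_equiv_bot h1.1 e hα) ?_ (fun {α} _ hα => ?_) V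
  · have hinduce : Gw.induce ∅ = ⊥ := by
      ext ⟨_, h⟩
      exact h.elim
    have hempty : P (∅ : Set W) ⊥ := hinduce ▸ h1.2 W Gw ∅ hw
    exact IsoClosed.of_equiv_bot h1.1 (Equiv.equivOfIsEmpty _ _) hempty
  · have h := h2 α ⊥ hα
    rw [addK1_bot] at h
    exact IsoClosed.of_equiv_bot h1.1 (Equiv.optionEquivSumPUnit α).symm h

end Edgeless

section Domination

variable {P : GraphProp} {V : Type}

lemma IsDominating.mono {G G' : SimpleGraph V} {S : Set V} (hle : G ≤ G')
    (hS : IsDominating G S) : IsDominating G' S := fun v hv =>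
  let ⟨u, hu, huv⟩ := hS v hv
  ⟨u, hu, hle huv⟩

lemma Maximal.isDominating_of_isIndepSet {G : SimpleGraph V} {S : Set V}
    (hS : Maximal G.IsIndepSet S) : IsDominating G S := by
  intro v hv
  by_contra! hno
  refine hv (hS.mem_of_prop_insert ?_)
  exact hS.1.insert fun u hu _ => ⟨fun h => hno u hu h.symm, hno u hu⟩

lemma exists_isDomPSet_of_bot [Finite V] (hbot : ∀ (U : Type) [Finite U], P U ⊥)
    (G : SimpleGraph V) : ∃ S, IsDomPSet P G S := by
  obtain ⟨S, -, hS⟩ := Finite.exists_le_maximal (p := G.IsIndepSet) (a := ∅) (by simp)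
  refine ⟨S, hS.isDominating_of_isIndepSet, ?_⟩
  have hind : G.induce S = ⊥ := by
    ext a b
    simpa using fun h => hS.1 a.2 b.2 (G.ne_of_adj h) h
  rw [hind]
  exact hbot S

variable [Fintype V]

lemma gammaP_le_ncard {G : SimpleGraph V} {S : Set V} (hS : IsDomPSet P G S) :
    gammaP P G ≤ S.ncard :=
  Nat.sInf_le ⟨S, hS, rfl⟩

lemma exists_isDomPSet_of_gammaP_ne_zero {G : SimpleGraph V} (h : gammaP P G ≠ 0) :
    ∃ S, IsDomPSet P G S := by
  by_contra! hno
  have hempty : {S | IsDomPSet P G S} = ∅ := Set.eq_empty_of_forall_notMem hno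
  simp [gammaP, hempty] at h

lemma exists_isGammaSet {G : SimpleGraph V} (h : ∃ S, IsDomPSet P G S) :
    ∃ M, IsGammaSet P G M := by
  obtain ⟨S, hS⟩ := h
  have hne : (Set.ncard '' {S | IsDomPSet P G S}).Nonempty := ⟨_, S, hS, rfl⟩
  obtain ⟨M, hM, hMcard⟩ := Nat.sInf_mem hne
  exact ⟨M, hM, hMcard⟩

end Domination

section EdgeDeletion

variable {P : GraphProp} {V : Type} {G : SimpleGraph V} {x y : V} {M : Set V}

lemma induce_deleteEdges_eq_of_not_both_mem (hxy : ¬(x ∈ M ∧ y ∈ M)) :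
    (G.deleteEdges {s(x, y)}).induce M = G.induce M := by
  ext a b
  simp only [comap_adj, Function.Embedding.coe_subtype, deleteEdges_adj, Set.mem_singleton_iff,
    Sym2.eq_iff, and_iff_left_iff_imp]
  rintro - (⟨rfl, rfl⟩ | ⟨rfl, rfl⟩)
  exacts [hxy ⟨a.2, b.2⟩, hxy ⟨b.2, a.2⟩]

lemma IsDomPSet.of_deleteEdges (hM : IsDomPSet P (G.deleteEdges {s(x, y)}) M)
    (hxy : ¬(x ∈ M ∧ y ∈ M)) : IsDomPSet P G M :=
  ⟨hM.1.mono (deleteEdges_le _), induce_deleteEdges_eq_of_not_both_mem hxy ▸ hM.2⟩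

lemma IsDomPSet.mem_and_mem_of_ncard_lt_gammaP [Fintype V]
    (hM : IsDomPSet P (G.deleteEdges {s(x, y)}) M) (hlt : M.ncard < gammaP P G) :
    x ∈ M ∧ y ∈ M := by
  by_contra hxy
  exact (gammaP_le_ncard (hM.of_deleteEdges hxy)).not_gt hlt

end EdgeDeletion

section Subdivision

variable {P : GraphProp} {V : Type} {G : SimpleGraph V} {x y : V} {M : Set V}

lemma subdiv_adj_inl_inl {t : ℕ} {a b : V} :
    (subdiv G x y t).Adj (Sum.inl a) (Sum.inl b) ↔ (G.deleteEdges {s(x, y)}).Adj a b := by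
  simp only [deleteEdges_adj, Set.mem_singleton_iff, Sym2.eq_iff]
  rfl

noncomputable def induceImageInlSubdivIso (t : ℕ) :
    (G.deleteEdges {s(x, y)}).induce M ≃g (subdiv G x y t).induce (Sum.inl '' M) where
  toEquiv := Equiv.Set.image Sum.inl M Sum.inl_injective
  map_rel_iff' := subdiv_adj_inl_inl (t := t)

lemma IsDomPSet.image_inl_subdiv (hP : IsoClosed P)
    (hM : IsDomPSet P (G.deleteEdges {s(x, y)}) M) (hx : x ∈ M) :
    IsDomPSet P (subdiv G x y 1) (Sum.inl '' M) := by
  refine ⟨?_, hP _ _ _ _ ⟨induceImageInlSubdivIso 1⟩ hM.2⟩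
  rintro (v | i) hv
  · obtain ⟨u, hu, huv⟩ := hM.1 v fun hvM => hv ⟨v, hvM, rfl⟩
    exact ⟨Sum.inl u, ⟨u, hu, rfl⟩, subdiv_adj_inl_inl.2 huv⟩
  · exact ⟨Sum.inl x, ⟨x, hx, rfl⟩, Or.inl ⟨rfl, by omega⟩⟩

end Subdivision

theorem erminus_endpoints_and_subdiv_general (P : GraphProp) (h1 : InducedHereditary P)
    (h2 : ClosedUnderK1 P) {V : Type} [Fintype V] (G : SimpleGraph V) (x y : V)
    (hlt : gammaP P (G.deleteEdges {s(x, y)}) < gammaP P G) :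
    (∀ M : Set V, IsGammaSet P (G.deleteEdges {s(x, y)}) M → x ∈ M ∧ y ∈ M) ∧
    gammaP P (subdiv G x y 1) ≤ gammaP P (G.deleteEdges {s(x, y)}) ∧
    gammaP P (G.deleteEdges {s(x, y)}) < gammaP P G := by
  have endpoints : ∀ M, IsGammaSet P (G.deleteEdges {s(x, y)}) M → x ∈ M ∧ y ∈ M :=
    fun M hM => hM.1.mem_and_mem_of_ncard_lt_gammaP (hM.2 ▸ hlt)
  obtain ⟨D, hD⟩ := exists_isDomPSet_of_gammaP_ne_zero (Nat.ne_zero_of_lt hlt)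
  have hbot : ∀ (U : Type) [Finite U], P U ⊥ := h1.bot_of_closedUnderK1 h2 hD.2
  obtain ⟨M, hM⟩ := exists_isGammaSet (exists_isDomPSet_of_bot hbot (G.deleteEdges {s(x, y)}))
  refine ⟨endpoints, ?_, hlt⟩
  calc gammaP P (subdiv G x y 1)
      ≤ (Sum.inl '' M).ncard := gammaP_le_ncard (hM.1.image_inl_subdiv h1.1 (endpoints M hM).1)
    _ = gammaP P (G.deleteEdges {s(x, y)}) := by
      rw [Set.ncard_image_of_injective M Sum.inl_injective, hM.2]

/-- if `γ_H(G − e) < γ_H(G)` then every `γ_H`-set of `G − e` contains both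
endpoints of `e`, and `γ_H(G_e) ≤ γ_H(G − e) < γ_H(G)`. -/
theorem erminus_endpoints_and_subdiv (P : GraphProp) (h1 : InducedHereditary P)
    (h2 : ClosedUnderK1 P) {V : Type} [Fintype V] (G : SimpleGraph V) (x y : V)
    (he : G.Adj x y) (hlt : gammaP P (G.deleteEdges {s(x, y)}) < gammaP P G) :
    (∀ M : Set V, IsGammaSet P (G.deleteEdges {s(x, y)}) M → x ∈ M ∧ y ∈ M) ∧
    gammaP P (subdiv G x y 1) ≤ gammaP P (G.deleteEdges {s(x, y)}) ∧
    gammaP P (G.deleteEdges {s(x, y)}) < gammaP P G :=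
  erminus_endpoints_and_subdiv_general P h1 h2 G x y hlt
end

section
/- Let G be the graph formed by taking three disjoint stars K_{1,p} (p ≥ 2) and adding three edges e₁, e₂, e₃ joining their centers pairwise into a triangle. Then γ_F(G) = 2 + p and γ_F(G_{e_i}) = 3 for each i = 1,2,3, where F is the property of being a forest; hence each e_i is a γ_F-S⁻-critical edge. -/
open SimpleGraph

/-- Three disjoint stars `K_{1,p}` (centres `(i,0)`, leaves `(i,j)` for `j ≠ 0`) with the
three centres joined pairwise into a triangle. -/
def threeStars (p : ℕ) : SimpleGraph (Fin 3 × Fin (p + 1)) where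
  Adj a b := (a.1 = b.1 ∧ ((a.2 = 0 ∧ b.2 ≠ 0) ∨ (a.2 ≠ 0 ∧ b.2 = 0))) ∨
             (a.1 ≠ b.1 ∧ a.2 = 0 ∧ b.2 = 0)
  symm := by constructor; rintro a b h; tauto
  loopless := by constructor; rintro a h; tauto

/-- The forest property (acyclicity). -/
def forestP : GraphProp := fun _ G => G.IsAcyclic

section Helpers

lemma ncard_range_eq {α V : Type} [Fintype α] (f : α → V) (hf : Function.Injective f) :
    (Set.range f).ncard = Fintype.card α := by
  rw [← Set.image_univ, Set.ncard_image_of_injective _ hf, Set.ncard_univ,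
    Nat.card_eq_fintype_card]

lemma le_ncard_of_inj {α V : Type} [Fintype α] [Finite V] (f : α → V)
    (hf : Function.Injective f) (S : Set V) (h : ∀ a, f a ∈ S) :
    Fintype.card α ≤ S.ncard := by
  rw [← ncard_range_eq f hf]
  exact Set.ncard_le_ncard (Set.range_subset_iff.2 h) (Set.toFinite S)

lemma acyclic_of_two_edges {V : Type} (G : SimpleGraph V) (e₁ e₂ : Sym2 V)
    (h : ∀ a b, G.Adj a b → s(a, b) = e₁ ∨ s(a, b) = e₂) : G.IsAcyclic := by
  classical
  intro v c hc
  have hlen : 3 ≤ c.length := hc.three_le_length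
  have hnod : c.edges.Nodup := hc.edges_nodup
  have hsub : c.edges.toFinset ⊆ {e₁, e₂} := by
    intro e he
    rw [List.mem_toFinset] at he
    have hmem := c.edges_subset_edgeSet he
    induction e with
    | h a b =>
      rw [SimpleGraph.mem_edgeSet] at hmem
      simpa using h a b hmem
  have h1 : c.edges.toFinset.card = c.edges.length := List.toFinset_card_of_nodup hnod
  have h2 : c.edges.toFinset.card ≤ ({e₁, e₂} : Finset (Sym2 V)).card :=
    Finset.card_le_card hsub
  have h3 : ({e₁, e₂} : Finset (Sym2 V)).card ≤ 2 := Finset.card_insert_le _ _ |>.trans (by simp)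
  rw [← c.length_edges] at hlen
  omega

lemma not_acyclic_of_triangle {V : Type} (G : SimpleGraph V) (a b c : V)
    (hab : G.Adj a b) (hbc : G.Adj b c) (hca : G.Adj c a) : ¬ G.IsAcyclic := by
  intro h
  have hab' := hab.ne
  have hbc' := hbc.ne
  have hca' := hca.ne
  exact h (SimpleGraph.Walk.cons hab (SimpleGraph.Walk.cons hbc
      (SimpleGraph.Walk.cons hca SimpleGraph.Walk.nil)))
    (by
      rw [SimpleGraph.Walk.isCycle_def]
      refine ⟨?_, by simp, ?_⟩
      · rw [SimpleGraph.Walk.isTrail_def]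
        simp [Sym2.eq, Sym2.rel_iff', Prod.ext_iff, hab', hbc', hca', hab'.symm,
          hbc'.symm, hca'.symm]
      · simp [hbc', hab'.symm, hca'])

end Helpers

section MainLemmas

lemma threeStars_adj' (p : ℕ) (k l : Fin 3) (j j' : Fin (p + 1)) :
    (threeStars p).Adj (k, j) (l, j') ↔ ((k = l ∧ ((j = 0 ∧ j' ≠ 0) ∨ (j ≠ 0 ∧ j' = 0))) ∨
      (k ≠ l ∧ j = 0 ∧ j' = 0)) := Iff.rfl

lemma gamma_threeStars (p : ℕ) (hp : 2 ≤ p) : gammaP forestP (threeStars p) = 2 + p := by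
  classical
  have hz : ((0 : Fin (p + 1)) : ℕ) = 0 := Fin.val_zero _
  have hv0 : ((0 : Fin 3) : ℕ) = 0 := rfl
  have hv1 : ((1 : Fin 3) : ℕ) = 1 := rfl
  have hv2 : ((2 : Fin 3) : ℕ) = 2 := rfl
  have hcardα : Fintype.card (Fin 2 ⊕ Fin p) = 2 + p := by simp
  set f : Fin 2 ⊕ Fin p → Fin 3 × Fin (p + 1) :=
    Sum.elim (fun a => (⟨a.val, by omega⟩, 0)) (fun j => (2, ⟨j.val + 1, by omega⟩)) with hf
  have hfinj : Function.Injective f := by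
    rintro (a | a) (b | b) h <;>
      simp only [hf, Sum.elim_inl, Sum.elim_inr, Prod.mk.injEq, Fin.ext_iff, Fin.val_zero,
        hv2] at h
    · exact congrArg Sum.inl (Fin.ext (by omega))
    · omega
    · omega
    · exact congrArg Sum.inr (Fin.ext (by omega))
  set S₀ : Set (Fin 3 × Fin (p + 1)) := Set.range f with hS₀
  have hmem : ∀ (k : Fin 3) (j : Fin (p + 1)), ((k, j) ∈ S₀ ↔
      ((k.val = 0 ∧ j.val = 0) ∨ (k.val = 1 ∧ j.val = 0) ∨ (k.val = 2 ∧ j.val ≠ 0))) := by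
    intro k j
    constructor
    · rintro ⟨(a | a), hx⟩ <;>
        simp only [hf, Sum.elim_inl, Sum.elim_inr, Prod.mk.injEq, Fin.ext_iff, Fin.val_zero,
          hv2] at hx
      · have := a.isLt; omega
      · omega
    · rintro (⟨h1, h2⟩ | ⟨h1, h2⟩ | ⟨h1, h2⟩)
      · exact ⟨Sum.inl ⟨0, by omega⟩,
          Prod.ext_iff.mpr ⟨Fin.ext (show (0 : ℕ) = k.val by omega),
            Fin.ext (show (0 : ℕ) = j.val by omega)⟩⟩
      · exact ⟨Sum.inl ⟨1, by omega⟩,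
          Prod.ext_iff.mpr ⟨Fin.ext (show (1 : ℕ) = k.val by omega),
            Fin.ext (show (0 : ℕ) = j.val by omega)⟩⟩
      · exact ⟨Sum.inr ⟨j.val - 1, by have := j.isLt; omega⟩,
          Prod.ext_iff.mpr ⟨Fin.ext (show (2 : ℕ) = k.val by omega),
            Fin.ext (show j.val - 1 + 1 = j.val by omega)⟩⟩
  have h00 : ((0 : Fin 3), (0 : Fin (p + 1))) ∈ S₀ := (hmem 0 0).2 (by omega)
  have h10 : ((1 : Fin 3), (0 : Fin (p + 1))) ∈ S₀ := (hmem 1 0).2 (by omega)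
  have hdom : IsDominating (threeStars p) S₀ := by
    rintro ⟨k, j⟩ hv
    rw [hmem] at hv
    by_cases hk2 : k.val = 2
    · have hj : j.val = 0 := by by_contra h; exact hv (by omega)
      refine ⟨(0, 0), h00, ?_⟩
      rw [threeStars_adj']
      exact Or.inr ⟨fun h => by rw [Fin.ext_iff] at h; omega, rfl, Fin.ext (by omega)⟩
    · have hj : j.val ≠ 0 := by intro h0; have := k.isLt; exact hv (by omega)
      refine ⟨(k, 0), (hmem k 0).2 (by have := k.isLt; omega), ?_⟩
      rw [threeStars_adj']
      exact Or.inl ⟨rfl, Or.inl ⟨rfl, fun h => by rw [Fin.ext_iff] at h; omega⟩⟩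
  have hfor : forestP S₀ ((threeStars p).induce S₀) := by
    apply acyclic_of_two_edges _ (s(⟨((0 : Fin 3), (0 : Fin (p + 1))), h00⟩, ⟨(1, 0), h10⟩))
      (s(⟨((0 : Fin 3), (0 : Fin (p + 1))), h00⟩, ⟨(1, 0), h10⟩))
    rintro ⟨⟨a1, a2⟩, ha⟩ ⟨⟨b1, b2⟩, hb⟩ hadj
    have hadj' : (threeStars p).Adj (a1, a2) (b1, b2) := by
      simpa [SimpleGraph.induce] using hadj
    rw [threeStars_adj'] at hadj'
    simp only [ne_eq, Fin.ext_iff, Fin.val_zero] at hadj'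
    have ha' := (hmem a1 a2).1 ha
    have hb' := (hmem b1 b2).1 hb
    have hab : (a1.val = 0 ∧ a2.val = 0 ∧ b1.val = 1 ∧ b2.val = 0) ∨
        (a1.val = 1 ∧ a2.val = 0 ∧ b1.val = 0 ∧ b2.val = 0) := by omega
    rcases hab with ⟨ha1, ha2, hb1, hb2⟩ | ⟨ha1, ha2, hb1, hb2⟩
    · have e1 : (⟨(a1, a2), ha⟩ : S₀) = ⟨((0 : Fin 3), (0 : Fin (p + 1))), h00⟩ :=
        Subtype.ext (show (a1, a2) = ((0 : Fin 3), (0 : Fin (p + 1))) from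
          Prod.ext_iff.mpr ⟨Fin.ext (show a1.val = ((0 : Fin 3)).val by omega),
            Fin.ext (show a2.val = ((0 : Fin (p + 1))).val by omega)⟩)
      have e2 : (⟨(b1, b2), hb⟩ : S₀) = ⟨((1 : Fin 3), (0 : Fin (p + 1))), h10⟩ :=
        Subtype.ext (show (b1, b2) = ((1 : Fin 3), (0 : Fin (p + 1))) from
          Prod.ext_iff.mpr ⟨Fin.ext (show b1.val = ((1 : Fin 3)).val by omega),
            Fin.ext (show b2.val = ((0 : Fin (p + 1))).val by omega)⟩)
      rw [e1, e2]; exact Or.inl rfl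
    · have e1 : (⟨(a1, a2), ha⟩ : S₀) = ⟨((1 : Fin 3), (0 : Fin (p + 1))), h10⟩ :=
        Subtype.ext (show (a1, a2) = ((1 : Fin 3), (0 : Fin (p + 1))) from
          Prod.ext_iff.mpr ⟨Fin.ext (show a1.val = ((1 : Fin 3)).val by omega),
            Fin.ext (show a2.val = ((0 : Fin (p + 1))).val by omega)⟩)
      have e2 : (⟨(b1, b2), hb⟩ : S₀) = ⟨((0 : Fin 3), (0 : Fin (p + 1))), h00⟩ :=
        Subtype.ext (show (b1, b2) = ((0 : Fin 3), (0 : Fin (p + 1))) from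
          Prod.ext_iff.mpr ⟨Fin.ext (show b1.val = ((0 : Fin 3)).val by omega),
            Fin.ext (show b2.val = ((0 : Fin (p + 1))).val by omega)⟩)
      rw [e1, e2]; exact Or.inl Sym2.eq_swap
  have hubmem : (2 + p) ∈ Set.ncard ''
      {S : Set (Fin 3 × Fin (p + 1)) | IsDomPSet forestP (threeStars p) S} :=
    ⟨S₀, ⟨hdom, hfor⟩, by rw [hS₀, ncard_range_eq f hfinj, hcardα]⟩
  have hlb : ∀ S : Set (Fin 3 × Fin (p + 1)), IsDomPSet forestP (threeStars p) S →
      2 + p ≤ S.ncard := by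
    rintro S ⟨hdomS, hforS⟩
    have hstar : ∀ k : Fin 3, ((k, (0 : Fin (p + 1))) ∈ S) ∨
        ∀ j : Fin (p + 1), j ≠ 0 → (k, j) ∈ S := by
      intro k
      by_cases hc : (k, (0 : Fin (p + 1))) ∈ S
      · exact Or.inl hc
      · right
        intro j hj
        by_contra hjS
        obtain ⟨⟨u1, u2⟩, huS, hadj⟩ := hdomS (k, j) hjS
        rw [threeStars_adj'] at hadj
        rcases hadj with ⟨rfl, h2⟩ | ⟨_, _, hj0⟩
        · rcases h2 with ⟨h20, _⟩ | ⟨_, hj0⟩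
          · rw [h20] at huS; exact hc huS
          · exact hj hj0
        · exact hj hj0
    have hex : ∃ k : Fin 3, (k, (0 : Fin (p + 1))) ∉ S := by
      by_contra hcon
      push_neg at hcon
      refine not_acyclic_of_triangle ((threeStars p).induce S)
        ⟨(0, 0), hcon 0⟩ ⟨(1, 0), hcon 1⟩ ⟨(2, 0), hcon 2⟩ ?_ ?_ ?_ hforS
      all_goals
        simp only [SimpleGraph.comap_adj, Function.Embedding.coe_subtype]
        rw [threeStars_adj']
        exact Or.inr ⟨by decide, rfl, rfl⟩
    obtain ⟨i₀, hi₀⟩ := hex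
    have hleaves := (hstar i₀).resolve_left hi₀
    have hxel : ∀ k : Fin 3, ∃ x ∈ S, x.1 = k := by
      intro k
      rcases hstar k with h | h
      · exact ⟨(k, 0), h, rfl⟩
      · exact ⟨(k, ⟨1, by omega⟩), h _ (Fin.ne_of_val_ne (by simp)), rfl⟩
    obtain ⟨x1, hx1S, hx1⟩ := hxel (i₀ + 1)
    obtain ⟨x2, hx2S, hx2⟩ := hxel (i₀ + 2)
    have key : ∀ i : Fin 3, i ≠ i + 1 ∧ i ≠ i + 2 ∧ i + 1 ≠ i + 2 := by decide
    set g : Fin p ⊕ Fin 2 → Fin 3 × Fin (p + 1) :=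
      Sum.elim (fun j => (i₀, ⟨j.val + 1, by omega⟩))
        (fun b => if b = 0 then x1 else x2) with hg
    have hginj : Function.Injective g := by
      rintro (a | a) (b | b) h <;>
        simp only [hg, Sum.elim_inl, Sum.elim_inr] at h
      · simp only [Prod.mk.injEq, Fin.mk.injEq] at h
        exact congrArg Sum.inl (Fin.ext (by omega))
      · exfalso
        by_cases hb : b = 0 <;> simp only [hb, if_true, if_false, reduceIte] at h
        · exact (key i₀).1 (by rw [← hx1, ← h])
        · exact (key i₀).2.1 (by rw [← hx2, ← h])
      · exfalso
        by_cases ha : a = 0 <;> simp only [ha, if_true, if_false, reduceIte] at h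
        · exact (key i₀).1 (by rw [← hx1, h])
        · exact (key i₀).2.1 (by rw [← hx2, h])
      · have hfin2 : ∀ c : Fin 2, c = 0 ∨ c = 1 := by decide
        have neq : (1 : Fin 2) ≠ 0 := by decide
        rcases hfin2 a with rfl | rfl <;> rcases hfin2 b with rfl | rfl
        · rfl
        · rw [if_pos rfl, if_neg neq] at h
          exact absurd ((key i₀).2.2 (by rw [← hx1, ← hx2, h])) not_false
        · rw [if_neg neq, if_pos rfl] at h
          exact absurd ((key i₀).2.2 (by rw [← hx1, ← hx2, h.symm])) not_false
        · rfl
    have hgS : ∀ a, g a ∈ S := by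
      rintro (a | a)
      · exact hleaves _ (Fin.ne_of_val_ne (by simp))
      · by_cases ha : a = 0 <;> simp only [hg, Sum.elim_inr, ha, if_true, if_false, reduceIte]
        · exact hx1S
        · exact hx2S
    have hcount := le_ncard_of_inj g hginj S hgS
    simp only [Fintype.card_sum, Fintype.card_fin] at hcount
    omega
  refine le_antisymm (Nat.sInf_le hubmem) (le_csInf ⟨_, hubmem⟩ ?_)
  rintro n ⟨S, hS, rfl⟩
  exact hlb S hS

end MainLemmas

section Part2

lemma subdiv_adj_inl_inl_s18 {V : Type} (G : SimpleGraph V) (u v : V) (t : ℕ) (a b : V) :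
    (subdiv G u v t).Adj (Sum.inl a) (Sum.inl b) ↔
      (G.Adj a b ∧ ¬((a = u ∧ b = v) ∨ (a = v ∧ b = u))) := Iff.rfl

lemma subdiv_adj_inl_inr {V : Type} (G : SimpleGraph V) (u v : V) (t : ℕ) (a : V) (x : Fin t) :
    (subdiv G u v t).Adj (Sum.inl a) (Sum.inr x) ↔
      ((a = u ∧ (x : ℕ) = 0) ∨ (a = v ∧ (x : ℕ) + 1 = t)) := Iff.rfl

lemma subdiv_adj_inr_inl {V : Type} (G : SimpleGraph V) (u v : V) (t : ℕ) (a : V) (x : Fin t) :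
    (subdiv G u v t).Adj (Sum.inr x) (Sum.inl a) ↔
      ((a = u ∧ (x : ℕ) = 0) ∨ (a = v ∧ (x : ℕ) + 1 = t)) := Iff.rfl

lemma gamma_subdiv (p : ℕ) (hp : 2 ≤ p) (i : Fin 3) :
    gammaP forestP (subdiv (threeStars p) (i, 0) (i + 1, 0) 1) = 3 := by
  classical
  set G := subdiv (threeStars p) (i, 0) (i + 1, 0) 1 with hG
  have key : ∀ i' k l : Fin 3, k ≠ l → ¬((k = i' ∧ l = i' + 1) ∨ (k = i' + 1 ∧ l = i')) →
      ((k = i' ∧ l = i' + 2) ∨ (k = i' + 2 ∧ l = i') ∨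
        (k = i' + 1 ∧ l = i' + 2) ∨ (k = i' + 2 ∧ l = i' + 1)) := by decide
  set g : Fin 3 → (Fin 3 × Fin (p + 1)) ⊕ Fin 1 := fun k => Sum.inl (k, 0) with hg
  have hginj : Function.Injective g := by
    intro a b h
    simpa [hg, Prod.ext_iff] using h
  set S₁ : Set ((Fin 3 × Fin (p + 1)) ⊕ Fin 1) := Set.range g with hS₁
  have hmem : ∀ x, x ∈ S₁ ↔ ∃ k : Fin 3, x = Sum.inl (k, 0) := by
    intro x
    constructor
    · rintro ⟨k, rfl⟩; exact ⟨k, rfl⟩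
    · rintro ⟨k, rfl⟩; exact ⟨k, rfl⟩
  have hone : ((⟨1, by omega⟩ : Fin (p + 1))) ≠ 0 := Fin.ne_of_val_ne (by simp)
  have hdom : IsDominating G S₁ := by
    rintro (⟨k, j⟩ | z) hv
    · have hj : j ≠ 0 := by
        intro h; subst h; exact hv ⟨k, rfl⟩
      refine ⟨Sum.inl (k, 0), ⟨k, rfl⟩, ?_⟩
      rw [hG, subdiv_adj_inl_inl_s18]
      constructor
      · rw [threeStars_adj']; exact Or.inl ⟨rfl, Or.inl ⟨rfl, hj⟩⟩
      · rintro (⟨h1, h2⟩ | ⟨h1, h2⟩) <;> exact hj (congrArg Prod.snd h2)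
    · refine ⟨Sum.inl (i, 0), ⟨i, rfl⟩, ?_⟩
      rw [hG, subdiv_adj_inl_inr]
      left
      exact ⟨rfl, by have := z.isLt; omega⟩
  have hfor : forestP S₁ (G.induce S₁) := by
    apply acyclic_of_two_edges _
      (s((⟨Sum.inl (i, 0), ⟨i, rfl⟩⟩ : S₁), (⟨Sum.inl (i + 2, 0), ⟨i + 2, rfl⟩⟩ : S₁)))
      (s((⟨Sum.inl (i + 1, 0), ⟨i + 1, rfl⟩⟩ : S₁), (⟨Sum.inl (i + 2, 0), ⟨i + 2, rfl⟩⟩ : S₁)))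
    rintro ⟨x, hx⟩ ⟨y, hy⟩ hadj
    obtain ⟨k, rfl⟩ := (hmem x).1 hx
    obtain ⟨l, rfl⟩ := (hmem y).1 hy
    have hadj' : G.Adj (Sum.inl (k, 0)) (Sum.inl (l, 0)) := by
      simpa [SimpleGraph.induce] using hadj
    rw [hG, subdiv_adj_inl_inl_s18, threeStars_adj'] at hadj'
    obtain ⟨hA, hdel⟩ := hadj'
    have hkl : k ≠ l := by
      rcases hA with ⟨_, (⟨h1, h2⟩ | ⟨h1, h2⟩)⟩ | ⟨h, _, _⟩
      · exact absurd rfl h2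
      · exact absurd rfl h1
      · exact h
    have hdel' : ¬((k = i ∧ l = i + 1) ∨ (k = i + 1 ∧ l = i)) := by
      rintro (⟨rfl, rfl⟩ | ⟨rfl, rfl⟩)
      · exact hdel (Or.inl ⟨rfl, rfl⟩)
      · exact hdel (Or.inr ⟨rfl, rfl⟩)
    rcases key i k l hkl hdel' with ⟨rfl, rfl⟩ | ⟨rfl, rfl⟩ | ⟨rfl, rfl⟩ | ⟨rfl, rfl⟩
    · exact Or.inl rfl
    · exact Or.inl Sym2.eq_swap
    · exact Or.inr rfl
    · exact Or.inr Sym2.eq_swap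
  have hubmem : 3 ∈ Set.ncard ''
      {S : Set ((Fin 3 × Fin (p + 1)) ⊕ Fin 1) | IsDomPSet forestP G S} :=
    ⟨S₁, ⟨hdom, hfor⟩, by rw [hS₁, ncard_range_eq g hginj]; simp⟩
  have hlb : ∀ S : Set ((Fin 3 × Fin (p + 1)) ⊕ Fin 1), IsDomPSet forestP G S →
      3 ≤ S.ncard := by
    rintro S ⟨hdomS, -⟩
    have hstar : ∀ k : Fin 3, Sum.inl (k, (0 : Fin (p + 1))) ∈ S ∨
        Sum.inl (k, (⟨1, by omega⟩ : Fin (p + 1))) ∈ S := by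
      intro k
      by_cases hc : Sum.inl (k, (0 : Fin (p + 1))) ∈ S
      · exact Or.inl hc
      right
      by_cases hl : Sum.inl (k, (⟨1, by omega⟩ : Fin (p + 1))) ∈ S
      · exact hl
      exfalso
      obtain ⟨u, huS, hadj⟩ := hdomS _ hl
      match u with
      | Sum.inl (u1, u2) =>
        rw [hG, subdiv_adj_inl_inl_s18, threeStars_adj'] at hadj
        obtain ⟨hA, -⟩ := hadj
        rcases hA with ⟨rfl, (⟨h20, -⟩ | ⟨-, h10'⟩)⟩ | ⟨-, -, h10'⟩
        · rw [h20] at huS; exact hc huS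
        · exact hone h10'
        · exact hone h10'
      | Sum.inr z =>
        rw [hG, subdiv_adj_inr_inl] at hadj
        rcases hadj with ⟨h1, -⟩ | ⟨h1, -⟩ <;> exact hone (congrArg Prod.snd h1)
    set t : (Fin 3 × Fin (p + 1)) ⊕ Fin 1 → Fin 3 := Sum.elim Prod.fst (fun _ => 0) with ht
    set g2 : Fin 3 → (Fin 3 × Fin (p + 1)) ⊕ Fin 1 := fun k =>
      if Sum.inl (k, (0 : Fin (p + 1))) ∈ S then Sum.inl (k, 0)
      else Sum.inl (k, (⟨1, by omega⟩ : Fin (p + 1))) with hg2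
    have hg2S : ∀ k, g2 k ∈ S := by
      intro k
      by_cases hc : Sum.inl (k, (0 : Fin (p + 1))) ∈ S
      · simp only [hg2]; rw [if_pos hc]; exact hc
      · simp only [hg2]; rw [if_neg hc]; exact (hstar k).resolve_left hc
    have htg : ∀ k, t (g2 k) = k := by
      intro k
      by_cases hc : Sum.inl (k, (0 : Fin (p + 1))) ∈ S
      · simp only [hg2]; rw [if_pos hc]; rfl
      · simp only [hg2]; rw [if_neg hc]; rfl
    have hg2inj : Function.Injective g2 := fun a b h => by
      rw [← htg a, ← htg b, h]
    have hcount := le_ncard_of_inj g2 hg2inj S hg2S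
    simpa using hcount
  refine le_antisymm (Nat.sInf_le hubmem) (le_csInf ⟨_, hubmem⟩ ?_)
  rintro n ⟨S, hS, rfl⟩
  exact hlb S hS

end Part2

/-- `γ_F(G) = 2 + p` and `γ_F(G_{eᵢ}) = 3` for the triangle-of-stars graph;
hence each edge joining two centres is `γ_F`-S⁻-critical. -/
theorem threeStars_acyclic_domination (p : ℕ) (hp : 2 ≤ p) :
    gammaP forestP (threeStars p) = 2 + p ∧
    ∀ i : Fin 3,
      gammaP forestP (subdiv (threeStars p) (i, 0) (i + 1, 0) 1) = 3 ∧
      gammaP forestP (subdiv (threeStars p) (i, 0) (i + 1, 0) 1) < gammaP forestP (threeStars p) := by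
  refine ⟨gamma_threeStars p hp, fun i => ?_⟩
  refine ⟨gamma_subdiv p hp i, ?_⟩
  rw [gamma_subdiv p hp i, gamma_threeStars p hp]
  omega
end
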